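/- Fix x ∈ W and let S = { (1/n)·δ_x : n ∈ ℕ, n ≥ 1 } ⊆ M_f^∞, where δ_x is the Dirac measure at x. Then S is bounded in (M_f^∞, OT_∞), uniformly off-diagonally finite, and off-diagonally uniformly tight, but S is not relatively compact in (M_f^∞, OT_∞). In particular, boundedness, uniform off-diagonal finiteness, and off-diagonal uniform tightness together are not sufficient for relative compactness in (M_f^∞, OT_∞). -/

import Mathlib

/-! Common setup: the birth-death plane, Radon measures, partial optimal transport. -/

noncomputable section

open MeasureTheory Topology Filter Set
open scoped ENNReal

/-- The ambient plane `ℝ²` (with the sup-norm, i.e. `q = ∞`). -/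
abbrev P2 : Type := ℝ × ℝ

/-- The birth-death plane `W = {(b,d) : b < d}`. -/
def Wbd : Set P2 := {p | p.1 < p.2}

/-- The closure `W̄` of the birth-death plane. -/
def Wcl : Set P2 := closure Wbd

/-- The diagonal `Δ`. -/
def Diag : Set P2 := {p | p.1 = p.2}

/-- Distance from a point to the diagonal, `‖x - Δ‖`. -/
def distDiag (x : P2) : ℝ := Metric.infDist x Diag

/-- The pseudometric `d(x,y) = min(‖x-y‖, ‖x-Δ‖ + ‖y-Δ‖)` on `W̄`. -/
def dW (x y : P2) : ℝ := min (dist x y) (distDiag x + distDiag y)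

/-- The support of a Borel measure: points all of whose neighborhoods have
positive measure. -/
def msupport {α : Type*} [TopologicalSpace α] [MeasurableSpace α] (μ : Measure α) : Set α :=
  {x | ∀ U ∈ 𝓝 x, 0 < μ U}

/-- `μ` is a Radon measure on the subspace `S`: it vanishes off `S`, is inner regular
(on relatively open sets) by compact sets, outer regular (by relatively open sets), and finite
on compact subsets of `S`. -/
def RadonOn {α : Type*} [TopologicalSpace α] [MeasurableSpace α] (S : Set α)
    (μ : Measure α) : Prop :=
  μ Sᶜ = 0 ∧
  (∀ U : Set α, IsOpen U → μ (U ∩ S) = ⨆ (K : Set α) (_ : K ⊆ U ∩ S) (_ : IsCompact K), μ K) ∧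
  (∀ E : Set α, E ⊆ S → MeasurableSet E →
    μ E = ⨅ (U : Set α) (_ : IsOpen U) (_ : E ⊆ U), μ (U ∩ S)) ∧
  (∀ K : Set α, K ⊆ S → IsCompact K → μ K < ⊤)

/-- The set `M` of Radon measures on `W`. -/
def MRadon : Set (Measure P2) := {μ | RadonOn Wbd μ}

/-- `pers_∞(μ) = sup{‖x-Δ‖ : x ∈ spt μ}` (valued in `ℝ≥0∞`). -/
def persInf (μ : Measure P2) : ℝ≥0∞ := ⨆ x ∈ msupport μ, ENNReal.ofReal (distDiag x)

/-- The space `M^∞` of Radon measures on `W` with finite `∞`-persistence. -/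
def MInf : Set (Measure P2) := {μ | RadonOn Wbd μ ∧ persInf μ < ⊤}

/-- A coupling (admissible transport plan) between `μ` and `ν`: a Radon measure on
`W̄ × W̄` whose marginals restricted to Borel subsets of `W` are `μ` and `ν`. -/
def IsCoupling (π : Measure (P2 × P2)) (μ ν : Measure P2) : Prop :=
  RadonOn (Wcl ×ˢ Wcl) π ∧
  (∀ A : Set P2, A ⊆ Wbd → MeasurableSet A → π (A ×ˢ Wcl) = μ A) ∧
  (∀ B : Set P2, B ⊆ Wbd → MeasurableSet B → π (Wcl ×ˢ B) = ν B)

/-- The `∞`-cost of a transport plan: `sup {d(x,y) : (x,y) ∈ spt π}`. -/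
def costInf (π : Measure (P2 × P2)) : ℝ≥0∞ :=
  ⨆ p ∈ msupport π, ENNReal.ofReal (dW p.1 p.2)

/-- The partial `∞`-optimal transport distance. -/
def OT (μ ν : Measure P2) : ℝ≥0∞ :=
  ⨅ (π : Measure (P2 × P2)) (_ : IsCoupling π μ ν), costInf π

/-- `W_ε = {(x,y) : y - x > ε}`. -/
def Weps (ε : ℝ) : Set P2 := {p | p.2 - p.1 > ε}

/-- The space `M_f^∞` of off-diagonally finite measures. -/
def Mf : Set (Measure P2) := {μ | μ ∈ MInf ∧ ∀ ε : ℝ, 0 < ε → μ (Weps ε) < ⊤}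

/-- The space `M_fin^∞` of finite measures in `M^∞`. -/
def Mfin : Set (Measure P2) := {μ | μ ∈ MInf ∧ μ Wbd < ⊤}

/-- `f ∈ C_c(W)`: a continuous function, compactly supported, with support contained
in the open set `W` (extended by zero to the plane). -/
def IsCcW (f : P2 → ℝ) : Prop :=
  Continuous f ∧ HasCompactSupport f ∧ tsupport f ⊆ Wbd

/-- Convergence of a sequence of measures to `μ` in the distance `OT_∞`. -/
def OTConv (u : ℕ → Measure P2) (μ : Measure P2) : Prop :=
  Tendsto (fun n => OT (u n) μ) atTop (𝓝 0)

/-- `S` is relatively compact in `(M_f^∞, OT_∞)` (sequential formulation, equivalent to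
compactness of the closure in a metric space): every sequence in `S` has a subsequence
converging in `OT_∞` to some element of `M_f^∞`. -/
def RelCompactInMf (S : Set (Measure P2)) : Prop :=
  ∀ u : ℕ → Measure P2, (∀ n, u n ∈ S) →
    ∃ μ ∈ Mf, ∃ φ : ℕ → ℕ, StrictMono φ ∧ Tendsto (fun n => OT (u (φ n)) μ) atTop (𝓝 0)

/-!
Each `c • δ_x` with `0 < c ≤ 1` is within `OT_∞`-distance `‖x - Δ‖` of `δ_x`: keep mass `c` at
`x` and send the rest to the diagonal. Concentrated at the single point `x`, the family is
trivially uniformly finite and tight. But a coupling of small cost between `c • δ_x` and any `μ`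
can move mass neither out of nor into a small ball around `x`, because the points of that ball are
far from `Δ` and so cannot be matched cheaply with the diagonal; hence `μ` gives the ball mass
exactly `c`. A limit of a subsequence would have to give it infinitely many different masses.
-/

section Support

variable {α : Type*} [TopologicalSpace α] [MeasurableSpace α]

lemma msupport_eq_support (μ : Measure α) : msupport μ = μ.support := by
  ext x
  rw [Measure.mem_support_iff_forall]
  rfl

lemma msupport_subset_of_isClosed {μ : Measure α} {F : Set α} (hF : IsClosed F)
    (h0 : μ Fᶜ = 0) : msupport μ ⊆ F := by
  rw [msupport_eq_support]
  exact Measure.support_subset_of_isClosed hF h0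

lemma radonOn_of_measure_compl_eq_zero [T1Space α] {S F : Set α} {μ : Measure α}
    (hF : F.Finite) (hFS : F ⊆ S) (h0 : μ Fᶜ = 0) (hfin : μ F < ⊤) : RadonOn S μ := by
  refine ⟨measure_mono_null (compl_subset_compl.2 hFS) h0, fun U _ => ?_, fun E hES _ => ?_,
    fun K _ _ => ?_⟩
  · refine le_antisymm ?_ (iSup₂_le fun K hK => iSup_le fun _ => measure_mono hK)
    calc μ (U ∩ S) = μ (U ∩ S ∩ F) := (measure_inter_conull h0).symm
      _ ≤ _ := le_iSup_of_le (U ∩ S ∩ F) <| le_iSup_of_le inter_subset_left <|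
          le_iSup (fun _ => μ (U ∩ S ∩ F)) (hF.subset inter_subset_right).isCompact
  · refine le_antisymm (le_iInf fun U => le_iInf fun _ => le_iInf fun hEU =>
      measure_mono (subset_inter hEU hES)) ?_
    have hopen : IsOpen (F \ E)ᶜ := (hF.subset sdiff_subset).isClosed.isOpen_compl
    have hE : E ⊆ (F \ E)ᶜ := fun p hp hpd => hpd.2 hp
    refine iInf₂_le_of_le _ hopen (iInf_le_of_le hE ?_)
    calc μ ((F \ E)ᶜ ∩ S) = μ ((F \ E)ᶜ ∩ S ∩ F) := (measure_inter_conull h0).symm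
      _ ≤ μ E := measure_mono fun p ⟨⟨hp, _⟩, hpF⟩ => not_not.1 fun hpE => hp ⟨hpF, hpE⟩
  · calc μ K = μ (K ∩ F) := (measure_inter_conull h0).symm
      _ ≤ μ F := measure_mono inter_subset_right
      _ < ⊤ := hfin

end Support

section Geometry

lemma dW_comm (p q : P2) : dW p q = dW q p := by
  rw [dW, dW, dist_comm, add_comm]

lemma distDiag_nonneg (p : P2) : 0 ≤ distDiag p :=
  Metric.infDist_nonneg

lemma distDiag_sub_dist_le (p x : P2) : distDiag x - dist p x ≤ distDiag p := by
  have := Metric.infDist_le_infDist_add_dist (x := x) (y := p) (s := Diag)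
  rw [dist_comm] at this
  rw [distDiag, distDiag]
  linarith

lemma half_width_le_distDiag (x : P2) : (x.2 - x.1) / 2 ≤ distDiag x := by
  refine (Metric.le_infDist (s := Diag) ⟨(0, 0), rfl⟩).2 fun y hy => ?_
  have hy : y.1 = y.2 := hy
  rw [Prod.dist_eq, Real.dist_eq, Real.dist_eq]
  linarith [le_max_left |x.1 - y.1| |x.2 - y.2|, le_max_right |x.1 - y.1| |x.2 - y.2|,
    neg_abs_le (x.1 - y.1), le_abs_self (x.2 - y.2)]

lemma ball_subset_Wbd (x : P2) : Metric.ball x ((x.2 - x.1) / 2) ⊆ Wbd := by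
  intro y hy
  rw [Metric.mem_ball, Prod.dist_eq, max_lt_iff, Real.dist_eq, Real.dist_eq, abs_lt,
    abs_lt] at hy
  show y.1 < y.2
  linarith [hy.1.2, hy.2.1]

lemma Wbd_subset_Wcl : Wbd ⊆ Wcl :=
  subset_closure

lemma Diag_subset_Wcl : Diag ⊆ Wcl := by
  rintro ⟨a, b⟩ (rfl : a = b)
  have hlim : Tendsto (fun t : ℝ => ((a, a + t) : P2)) (𝓝[>] (0 : ℝ)) (𝓝 (a, a)) := by
    refine tendsto_nhdsWithin_of_tendsto_nhds ?_
    simpa using ((continuous_const.prodMk (continuous_const.add continuous_id)).tendsto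
      (0 : ℝ) : Tendsto (fun t : ℝ => ((a, a + t) : P2)) _ _)
  exact mem_closure_of_tendsto hlim <| eventually_nhdsWithin_of_forall fun t (ht : 0 < t) =>
    show a < a + t by linarith

lemma min_lt_dW {x p q : P2} {s t : ℝ} (hp : dist p x < s) (hq : t ≤ dist q x) :
    min (t - s) (distDiag x - s) < dW p q := by
  refine min_lt_min ?_ ?_
  · linarith [dist_triangle q p x, dist_comm p q]
  · linarith [distDiag_sub_dist_le p x, distDiag_nonneg q]

end Geometry

section Transport

variable {π : Measure (P2 × P2)} {μ ν : Measure P2} {A B : Set P2}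

lemma exists_coupling_of_OT_lt {c : ℝ≥0∞} (h : OT μ ν < c) :
    ∃ π, IsCoupling π μ ν ∧ costInf π < c := by
  simpa only [OT, iInf_lt_iff, exists_prop] using h

lemma costInf_le_of_measure_compl_eq_zero {F : Set (P2 × P2)} {η : ℝ} (hF : IsClosed F)
    (h0 : π Fᶜ = 0) (hη : ∀ p ∈ F, dW p.1 p.2 ≤ η) : costInf π ≤ ENNReal.ofReal η :=
  iSup₂_le fun p hp => ENNReal.ofReal_le_ofReal (hη p (msupport_subset_of_isClosed hF h0 hp))

lemma measure_le_dW_eq_zero {η : ℝ} (h : costInf π < ENNReal.ofReal η) :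
    π {p | η ≤ dW p.1 p.2} = 0 := by
  refine measure_mono_null ?_ (Measure.measure_compl_support (μ := π))
  intro p (hp : η ≤ dW p.1 p.2) hsupp
  rw [← msupport_eq_support] at hsupp
  have hcost : ENNReal.ofReal (dW p.1 p.2) < ENNReal.ofReal η :=
    (le_iSup₂_of_le p hsupp le_rfl).trans_lt h
  exact (ENNReal.ofReal_lt_ofReal_iff'.1 hcost).1.not_ge hp

lemma IsCoupling.measure_le (hπ : IsCoupling π μ ν) (hA : A ⊆ Wbd) (hB : B ⊆ Wbd)
    (hAm : MeasurableSet A) (hBm : MeasurableSet B) (hAB : π (A ×ˢ Bᶜ) = 0) : μ A ≤ ν B :=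
  calc μ A = π (A ×ˢ Wcl) := (hπ.2.1 A hA hAm).symm
    _ ≤ π (A ×ˢ Bᶜ ∪ Wcl ×ˢ B) := measure_mono fun p ⟨hp1, _⟩ =>
        (em (p.2 ∈ B)).elim (fun h => Or.inr ⟨Wbd_subset_Wcl (hA hp1), h⟩)
          (fun h => Or.inl ⟨hp1, h⟩)
    _ ≤ π (A ×ˢ Bᶜ) + π (Wcl ×ˢ B) := measure_union_le _ _
    _ = ν B := by rw [hAB, zero_add, hπ.2.2 B hB hBm]

lemma IsCoupling.measure_le' (hπ : IsCoupling π μ ν) (hA : A ⊆ Wbd) (hB : B ⊆ Wbd)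
    (hAm : MeasurableSet A) (hBm : MeasurableSet B) (hAB : π (Aᶜ ×ˢ B) = 0) : ν B ≤ μ A :=
  calc ν B = π (Wcl ×ˢ B) := (hπ.2.2 B hB hBm).symm
    _ ≤ π (Aᶜ ×ˢ B ∪ A ×ˢ Wcl) := measure_mono fun p ⟨_, hp2⟩ =>
        (em (p.1 ∈ A)).elim (fun h => Or.inr ⟨h, Wbd_subset_Wcl (hB hp2)⟩)
          (fun h => Or.inl ⟨h, hp2⟩)
    _ ≤ π (Aᶜ ×ˢ B) + π (A ×ˢ Wcl) := measure_union_le _ _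
    _ = μ A := by rw [hAB, zero_add, hπ.2.1 A hA hAm]

lemma measure_le_of_OT_lt {η : ℝ} (h : OT μ ν < ENNReal.ofReal η) (hA : A ⊆ Wbd)
    (hB : B ⊆ Wbd) (hAm : MeasurableSet A) (hBm : MeasurableSet B)
    (hAB : ∀ a ∈ A, ∀ b ∉ B, η ≤ dW a b) : μ A ≤ ν B := by
  obtain ⟨π, hπ, hcost⟩ := exists_coupling_of_OT_lt h
  exact hπ.measure_le hA hB hAm hBm <| measure_mono_null
    (fun p ⟨hp1, hp2⟩ => hAB p.1 hp1 p.2 hp2) (measure_le_dW_eq_zero hcost)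

lemma measure_le_of_OT_lt' {η : ℝ} (h : OT μ ν < ENNReal.ofReal η) (hA : A ⊆ Wbd)
    (hB : B ⊆ Wbd) (hAm : MeasurableSet A) (hBm : MeasurableSet B)
    (hAB : ∀ a ∉ A, ∀ b ∈ B, η ≤ dW a b) : ν B ≤ μ A := by
  obtain ⟨π, hπ, hcost⟩ := exists_coupling_of_OT_lt h
  exact hπ.measure_le' hA hB hAm hBm <| measure_mono_null
    (fun p ⟨hp1, hp2⟩ => hAB p.1 hp1 p.2 hp2) (measure_le_dW_eq_zero hcost)

end Transport

section Dirac

variable {α : Type*} [MeasurableSpace α] {x : α} {c : ℝ≥0∞} {A : Set α}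

lemma smul_dirac_apply_le : (c • Measure.dirac x) A ≤ c := by
  rw [Measure.smul_apply, smul_eq_mul]
  exact mul_le_of_le_one_right' prob_le_one

lemma smul_dirac_apply_of_mem (h : x ∈ A) : (c • Measure.dirac x) A = c := by
  simp [Measure.dirac_apply_of_mem h]

lemma smul_dirac_apply_of_notMem [MeasurableSingletonClass α] (h : x ∉ A) :
    (c • Measure.dirac x) A = 0 := by
  simp [Measure.dirac_apply, h]

end Dirac

section DiracFamily

variable {x : P2} {c : ℝ≥0∞}

lemma smul_dirac_mem_Mf (hx : x ∈ Wbd) (hc : c ≠ ⊤) : c • Measure.dirac x ∈ Mf := by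
  have h0 : (c • Measure.dirac x) {x}ᶜ = 0 := smul_dirac_apply_of_notMem (by simp)
  have hfin : ∀ A, (c • Measure.dirac x) A < ⊤ := fun _ => smul_dirac_apply_le.trans_lt hc.lt_top
  refine ⟨⟨radonOn_of_measure_compl_eq_zero (finite_singleton x) (singleton_subset_iff.2 hx) h0
    (hfin _), ?_⟩, fun _ _ => hfin _⟩
  refine lt_of_le_of_lt (iSup₂_le fun y hy => ?_) (ENNReal.ofReal_lt_top (r := distDiag x))
  rw [msupport_subset_of_isClosed isClosed_singleton h0 hy]

lemma isCoupling_dirac_smul_dirac (hx : x ∈ Wbd) (hc : c ≤ 1) {y : P2} (hy : y ∈ Diag) :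
    IsCoupling (c • Measure.dirac (x, x) + (1 - c) • Measure.dirac (x, y))
      (Measure.dirac x) (c • Measure.dirac x) := by
  have hxW : x ∈ Wcl := Wbd_subset_Wcl hx
  have hyW : y ∈ Wcl := Diag_subset_Wcl hy
  refine ⟨radonOn_of_measure_compl_eq_zero (toFinite {(x, x), (x, y)}) ?_ (by simp) ?_,
    fun A _ _ => ?_, fun B hB _ => ?_⟩
  · rintro p (rfl | rfl)
    exacts [⟨hxW, hxW⟩, ⟨hxW, hyW⟩]
  · refine (Measure.add_apply _ _ _).trans_lt (ENNReal.add_lt_top.2 ⟨?_, ?_⟩)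
    exacts [smul_dirac_apply_le.trans_lt (hc.trans_lt ENNReal.one_lt_top),
      smul_dirac_apply_le.trans_lt (tsub_le_self.trans_lt ENNReal.one_lt_top)]
  · rw [Measure.add_apply]
    by_cases hxA : x ∈ A
    · rw [smul_dirac_apply_of_mem (mk_mem_prod hxA hxW), smul_dirac_apply_of_mem
        (mk_mem_prod hxA hyW), add_tsub_cancel_of_le hc, Measure.dirac_apply_of_mem hxA]
    · rw [smul_dirac_apply_of_notMem fun h => hxA h.1, smul_dirac_apply_of_notMem
        fun h => hxA h.1, add_zero, ← one_smul ℝ≥0∞ (Measure.dirac x),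
        smul_dirac_apply_of_notMem hxA]
  · have hyB : (x, y) ∉ Wcl ×ˢ B := fun h => (hB h.2).ne (hy : y.1 = y.2)
    rw [Measure.add_apply, smul_dirac_apply_of_notMem hyB, add_zero]
    by_cases hxB : x ∈ B
    · rw [smul_dirac_apply_of_mem (mk_mem_prod hxW hxB), smul_dirac_apply_of_mem hxB]
    · rw [smul_dirac_apply_of_notMem fun h => hxB h.2, smul_dirac_apply_of_notMem hxB]

lemma OT_dirac_smul_dirac_le (hx : x ∈ Wbd) (hc : c ≤ 1) :
    OT (Measure.dirac x) (c • Measure.dirac x) ≤ ENNReal.ofReal (distDiag x) := by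
  set y : P2 := (x.1, x.1)
  have hy : y ∈ Diag := rfl
  have hF : ({(x, x), (x, y)} : Set (P2 × P2)).Finite := toFinite _
  refine iInf₂_le_of_le _ (isCoupling_dirac_smul_dirac hx hc hy)
    (costInf_le_of_measure_compl_eq_zero hF.isClosed (by simp) ?_)
  rintro p (rfl | rfl)
  · exact (min_le_left _ _).trans ((dist_self x).trans_le (distDiag_nonneg x))
  · exact (min_le_right _ _).trans_eq (by rw [distDiag, distDiag,
      Metric.infDist_zero_of_mem hy, add_zero])

lemma measure_ball_eq_of_OT_smul_dirac_lt (hx : x ∈ Wbd) {μ : Measure P2}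
    (h : OT (c • Measure.dirac x) μ < ENNReal.ofReal ((x.2 - x.1) / 8)) :
    μ (Metric.ball x ((x.2 - x.1) / 4)) = c := by
  set w := x.2 - x.1
  have hw : 0 < w := sub_pos.2 hx
  have hball : ∀ s ≤ w / 2, Metric.ball x s ⊆ Wbd := fun s hs =>
    (Metric.ball_subset_ball hs).trans (ball_subset_Wbd x)
  have hdist : w / 2 ≤ distDiag x := half_width_le_distDiag x
  apply le_antisymm
  · calc μ (Metric.ball x (w / 4)) ≤ (c • Measure.dirac x) (Metric.ball x (3 * w / 8)) :=
          measure_le_of_OT_lt' h (hball _ (by linarith)) (hball _ (by linarith))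
            Metric.isOpen_ball.measurableSet Metric.isOpen_ball.measurableSet
            fun a ha b hb => by
              rw [dW_comm]
              exact (le_min (by linarith) (by linarith)).trans
                (min_lt_dW hb (not_lt.1 ha)).le
      _ ≤ c := smul_dirac_apply_le
  · calc c = (c • Measure.dirac x) (Metric.ball x (w / 8)) :=
          (smul_dirac_apply_of_mem (Metric.mem_ball_self (by linarith))).symm
      _ ≤ μ (Metric.ball x (w / 4)) :=
          measure_le_of_OT_lt h (hball _ (by linarith)) (hball _ (by linarith))
            Metric.isOpen_ball.measurableSet Metric.isOpen_ball.measurableSet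
            fun a ha b hb => (le_min (by linarith) (by linarith)).trans
              (min_lt_dW ha (not_lt.1 hb)).le

lemma not_relCompactInMf_of_smul_dirac_mem (hx : x ∈ Wbd) {S : Set (Measure P2)}
    (c : ℕ → ℝ≥0∞) (hc : Function.Injective c) (hS : ∀ n, c n • Measure.dirac x ∈ S) :
    ¬ RelCompactInMf S := by
  intro hrc
  obtain ⟨μ, -, φ, hφ, hconv⟩ := hrc _ hS
  have hη : (0 : ℝ≥0∞) < ENNReal.ofReal ((x.2 - x.1) / 8) :=
    ENNReal.ofReal_pos.2 (by linarith [sub_pos.2 (show x.1 < x.2 from hx)])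
  obtain ⟨n, hn⟩ := (hconv.eventually_lt_const hη).exists_forall_of_atTop
  have hmass : c (φ n) = c (φ (n + 1)) :=
    (measure_ball_eq_of_OT_smul_dirac_lt hx (hn n le_rfl)).symm.trans
      (measure_ball_eq_of_OT_smul_dirac_lt hx (hn (n + 1) n.le_succ))
  exact (hφ n.lt_succ_self).ne (hc hmass)

end DiracFamily

/-- The counterexample: for fixed `x ∈ W`, the family
`S = { (1/n)·δ_x : n ≥ 1 }` is bounded, uniformly off-diagonally finite, and
off-diagonally uniformly tight, yet not relatively compact in `(M_f^∞, OT_∞)`. Hence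
these three conditions are not sufficient for relative compactness. -/
theorem dirac_family_not_relatively_compact (x : P2) (hx : x ∈ Wbd) :
    let S : Set (Measure P2) :=
      {μ | ∃ n : ℕ, 0 < n ∧ μ = ((n : ℝ≥0∞))⁻¹ • Measure.dirac x}
    S ⊆ Mf ∧
    (∃ μ ∈ S, ∃ M : ℝ, 0 < M ∧ ∀ ν ∈ S, OT μ ν < ENNReal.ofReal M) ∧
    (∀ ε : ℝ, 0 < ε → (⨆ μ ∈ S, μ (closure (Weps ε) ∩ Wbd)) < ⊤) ∧
    (∀ ε : ℝ, 0 < ε → ∀ δ : ℝ, 0 < δ → ∃ N : ℕ,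
      (⨆ μ ∈ S, μ (Weps ε ∩ ((Set.Icc (-(N : ℝ)) (N : ℝ))ᶜ ×ˢ Set.univ)))
        < ENNReal.ofReal δ) ∧
    ¬ RelCompactInMf S := by
  intro S
  have hinv_le_one {n : ℕ} (hn : 0 < n) : ((n : ℝ≥0∞))⁻¹ ≤ 1 :=
    ENNReal.inv_le_one.2 (by exact_mod_cast hn)
  have hM : 0 < distDiag x + 1 := by linarith [distDiag_nonneg x]
  refine ⟨?_, ⟨_, ⟨1, one_pos, rfl⟩, distDiag x + 1, hM, ?_⟩, fun ε _ => ?_,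
    fun ε _ δ hδ => ⟨⌈|x.1|⌉₊, ?_⟩, ?_⟩
  · rintro μ ⟨n, hn, rfl⟩
    exact smul_dirac_mem_Mf hx (ENNReal.inv_ne_top.2 (by exact_mod_cast hn.ne'))
  · rintro ν ⟨n, hn, rfl⟩
    rw [Nat.cast_one, inv_one, one_smul]
    exact (OT_dirac_smul_dirac_le hx (hinv_le_one hn)).trans_lt
      ((ENNReal.ofReal_lt_ofReal_iff hM).2 (lt_add_one _))
  · refine lt_of_le_of_lt (iSup₂_le ?_) ENNReal.one_lt_top
    rintro μ ⟨n, hn, rfl⟩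
    exact smul_dirac_apply_le.trans (hinv_le_one hn)
  · refine lt_of_le_of_lt (iSup₂_le ?_) (ENNReal.ofReal_pos.2 hδ)
    rintro μ ⟨n, -, rfl⟩
    exact (smul_dirac_apply_of_notMem fun hmem => hmem.2.1 (abs_le.1 (Nat.le_ceil _))).le
  · refine not_relCompactInMf_of_smul_dirac_mem hx (fun n => ((n + 1 : ℕ) : ℝ≥0∞)⁻¹)
      (fun m n h => by simpa using h) fun n => ⟨n + 1, n.succ_pos, rfl⟩
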